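/- Let G = (V,E) be a finite simple connected graph such that there is no edge uv ∈ E for which the induced subgraph G[V ∖ {u,v}] is disconnected, and let n < |V|. Then for every pair of vertex sets S, T ⊆ V with |S| = |T| = n, there exists a plan for 0IUMAPF (unlabeled multi-agent pathfinding) from S to T. -/

import Mathlib

open SimpleGraph

/-- A configuration of `n` agents is distance-`r` independent if distinct agents are
at graph distance at least `r + 1`. A plan for `rIUMAPF` of length `ℓ` from `S` to `T`:
the occupied sets at times `0` and `ℓ` are `S` and `T`, every configuration up to time `ℓ`
is distance-`r` independent, and each agent moves within closed neighborhoods. -/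
def IsPlan {V : Type*} (G : SimpleGraph V) (r n ℓ : ℕ) (Q : ℕ → Fin n → V)
    (S T : Set V) : Prop :=
  Set.range (Q 0) = S ∧ Set.range (Q ℓ) = T ∧
  (∀ k ≤ ℓ, ∀ i j : Fin n, i ≠ j → r + 1 ≤ G.dist (Q k i) (Q k j)) ∧
  (∀ k < ℓ, ∀ i : Fin n, Q (k + 1) i = Q k i ∨ G.Adj (Q k i) (Q (k + 1) i))

/-- Galactic distance-`r` independence: no two distinct agents on planets are within
distance `r` in the planet-induced subgraph (`edist = ⊤` when unreachable). -/
def GalIndep {V : Type*} (G : SimpleGraph V) (P : Set V) (r : ℕ) {n : ℕ}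
    (Q : Fin n → V) : Prop :=
  ∀ i j : Fin n, i ≠ j → ∀ (hi : Q i ∈ P) (hj : Q j ∈ P),
    (r : ℕ∞) < (G.induce P).edist ⟨Q i, hi⟩ ⟨Q j, hj⟩

/-- A plan for Galactic `rIUMAPF` from `S` to `T`. -/
def GalPlan {V : Type*} (G : SimpleGraph V) (P : Set V) (r n : ℕ)
    (S T : Set V) : Prop :=
  ∃ (ℓ : ℕ) (Q : ℕ → Fin n → V),
    Set.range (Q 0) = S ∧ Set.range (Q ℓ) = T ∧
    (∀ k ≤ ℓ, GalIndep G P r (Q k)) ∧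
    (∀ k < ℓ, ∀ i : Fin n, Q (k + 1) i = Q k i ∨ G.Adj (Q k i) (Q (k + 1) i))

/-- Closed neighborhood `N[X]` of a set of vertices. -/
def nclSet {V : Type*} (G : SimpleGraph V) (X : Set V) : Set V :=
  X ∪ {v | ∃ u ∈ X, G.Adj u v}

/-- Contraction of a vertex set `W` to a single new vertex (`Sum.inr ()`), which is
adjacent exactly to the vertices of `N(W) ∖ W`; everything else is unchanged. -/
def contractSet {V : Type*} (G : SimpleGraph V) (W : Set V) :
    SimpleGraph ({v : V // v ∉ W} ⊕ Unit) where
  Adj x y :=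
    match x, y with
    | Sum.inl u, Sum.inl v => G.Adj u.1 v.1
    | Sum.inl u, Sum.inr _ => ∃ w ∈ W, G.Adj u.1 w
    | Sum.inr _, Sum.inl v => ∃ w ∈ W, G.Adj v.1 w
    | Sum.inr _, Sum.inr _ => False
  symm := by
    constructor
    rintro (u | u) (v | v) h
    · exact h.symm
    · exact h
    · exact h
    · exact h
  loopless := by
    constructor
    rintro (u | u) h
    · exact G.loopless.irrefl u.1 h
    · exact h

/-- The planets of the contracted galactic graph: the surviving copies of planets. -/
def contractPlanets {V : Type*} (P W : Set V) : Set ({v : V // v ∉ W} ⊕ Unit) :=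
  {x | ∃ u : {v : V // v ∉ W}, u.1 ∈ P ∧ x = Sum.inl u}

/-- A subset of `V ∖ W` viewed inside the contracted vertex set. -/
def liftSet {V : Type*} (W X : Set V) : Set ({v : V // v ∉ W} ⊕ Unit) :=
  {x | ∃ u : {v : V // v ∉ W}, u.1 ∈ X ∧ x = Sum.inl u}

/-- The infinite grid graph on `ℤ × ℤ`: adjacency is unit `L1` distance. -/
def gridGraph : SimpleGraph (ℤ × ℤ) where
  Adj p q := |p.1 - q.1| + |p.2 - q.2| = 1
  symm := by
    constructor
    intro p q h
    rw [abs_sub_comm q.1, abs_sub_comm q.2]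
    exact h
  loopless := by
    constructor
    intro p h
    simp at h

/-!
Unlabeled agents on a connected graph can always be rearranged by token sliding: while the
occupied set `S` differs from the target `T`, pick `a ∈ S ∖ T` and `e ∈ T ∖ S` and push the
tokens along a walk from `a` to `e`, each one sliding into the next empty vertex ahead. The net
effect is that the token on `a` is replaced by one on `e`, which brings `S` one step closer to
`T`. Every slide moves a single agent to an adjacent empty vertex, so each intermediate
configuration has pairwise distinct positions.
-/

open Function Set Relation

theorem Function.Injective.range_update {α β : Type*} [DecidableEq α] {f : α → β}
    (hf : Injective f) (a : α) (b : β) :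
    range (update f a b) = insert b (range f \ {f a}) := by
  ext y
  simp only [mem_range, mem_insert_iff, mem_sdiff, mem_singleton_iff]
  constructor
  · rintro ⟨c, rfl⟩
    by_cases hc : c = a
    · subst hc; simp
    · exact .inr ⟨⟨c, (update_of_ne hc _ f).symm⟩, by rw [update_of_ne hc]; exact hf.ne hc⟩
  · rintro (rfl | ⟨⟨c, rfl⟩, hc⟩)
    · exact ⟨a, update_self a _ f⟩
    · exact ⟨c, update_of_ne (fun h => hc (congrArg f h)) _ f⟩

theorem Function.Injective.update_of_notMem_range {α β : Type*} [DecidableEq α] {f : α → β}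
    (hf : Injective f) (a : α) {b : β} (hb : b ∉ range f) : Injective (update f a b) := by
  intro c d h
  by_cases hc : c = a <;> by_cases hd : d = a
  · rw [hc, hd]
  · rw [hc, update_self, update_of_ne hd] at h; exact (hb ⟨d, h.symm⟩).elim
  · rw [hd, update_self, update_of_ne hc] at h; exact (hb ⟨c, h⟩).elim
  · rwa [update_of_ne hc, update_of_ne hd, hf.eq_iff] at h

theorem Relation.ReflTransGen.exists_seq {α : Type*} {r : α → α → Prop} {a b : α}
    (h : ReflTransGen r a b) :
    ∃ (ℓ : ℕ) (f : ℕ → α), f 0 = a ∧ f ℓ = b ∧ ∀ k < ℓ, r (f k) (f (k + 1)) := by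
  induction h using ReflTransGen.head_induction_on with
  | refl => exact ⟨0, fun _ => b, rfl, rfl, fun k hk => absurd hk k.not_lt_zero⟩
  | head hac _ ih =>
    obtain ⟨ℓ, f, hf0, hfℓ, hf⟩ := ih
    refine ⟨ℓ + 1, fun | 0 => _ | k + 1 => f k, rfl, hfℓ, ?_⟩
    rintro (_ | k) hk
    · show r _ (f 0)
      rwa [hf0]
    · exact hf k (by omega)

namespace SimpleGraph

variable {V ι : Type*} {G : SimpleGraph V}

/-- Configurations are embeddings `ι ↪ V`, so the vertex an agent slides to is automatically
unoccupied. -/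
def TokenSlide (G : SimpleGraph V) (q q' : ι ↪ V) : Prop :=
  ∃ i, G.Adj (q i) (q' i) ∧ ∀ j ≠ i, q' j = q j

theorem exists_tokenSlide {q : ι ↪ V} {a w : V} (ha : a ∈ range q) (hw : w ∉ range q)
    (haw : G.Adj a w) : ∃ q', G.TokenSlide q q' ∧ range q' = insert w (range q \ {a}) := by
  classical
  obtain ⟨i, rfl⟩ := ha
  refine ⟨⟨update q i w, q.injective.update_of_notMem_range i hw⟩,
    ⟨i, by simpa using haw, fun j hj => update_of_ne hj w q⟩, ?_⟩
  exact q.injective.range_update i w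

theorem exists_tokenSlides_of_walk {a e : V} (p : G.Walk a e) :
    ∀ q : ι ↪ V, a ∈ range q → e ∉ range q →
      ∃ q', ReflTransGen G.TokenSlide q q' ∧ range q' = insert e (range q \ {a}) := by
  induction p with
  | nil => exact fun q ha he => absurd ha he
  | @cons a x e hax p ih =>
    intro q ha he
    have hae : a ≠ e := fun h => he (h ▸ ha)
    by_cases hx : x ∈ range q
    · -- first clear `x` by pushing its token towards `e`, then slide `a` into `x`
      have hxe : x ≠ e := fun h => he (h ▸ hx)
      obtain ⟨q₁, h₁, hr₁⟩ := ih q hx he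
      obtain ⟨q₂, h₂, hr₂⟩ := exists_tokenSlide (q := q₁) (a := a) (w := x)
        (by simp [hr₁, ha, hax.ne, hae]) (by simp [hr₁, hxe]) hax
      refine ⟨q₂, h₁.tail h₂, ?_⟩
      rw [hr₂, hr₁]
      ext y
      simp only [mem_insert_iff, mem_sdiff, mem_singleton_iff]
      by_cases y = x <;> by_cases y = a <;> simp_all [hax.ne]
    · obtain ⟨q₁, h₁, hr₁⟩ := exists_tokenSlide ha hx hax
      by_cases hxe : x = e
      · subst hxe
        exact ⟨q₁, .single h₁, hr₁⟩
      obtain ⟨q₂, h₂, hr₂⟩ := ih q₁ (by simp [hr₁]) (by simp [hr₁, Ne.symm hxe, he])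
      refine ⟨q₂, .head h₁ h₂, ?_⟩
      rw [hr₂, hr₁]
      ext y
      simp only [mem_insert_iff, mem_sdiff, mem_singleton_iff]
      by_cases y = x <;> simp_all

theorem Connected.exists_tokenSlides [Finite ι] (hG : G.Connected) (q : ι ↪ V) {T : Set V}
    (hT : T.Finite) (hcard : T.ncard = Nat.card ι) :
    ∃ q', ReflTransGen G.TokenSlide q q' ∧ range q' = T := by
  have hsymm (q : ι ↪ V) : (range q \ T).ncard = (T \ range q).ncard :=
    (ncard_eq_ncard_iff_ncard_sdiff_eq_ncard_sdiff (toFinite _) hT).mp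
      (by rw [ncard_range_of_injective q.injective, hcard])
  obtain ⟨m, hm⟩ : ∃ m, (range q \ T).ncard = m := ⟨_, rfl⟩
  induction m generalizing q with
  | zero =>
    refine ⟨q, .refl, (sdiff_eq_empty.mp ?_).antisymm (sdiff_eq_empty.mp ?_)⟩
    · exact (ncard_eq_zero (toFinite _)).mp hm
    · exact (ncard_eq_zero hT.sdiff).mp (hsymm q ▸ hm)
  | succ m ih =>
    obtain ⟨a, haq, haT⟩ := nonempty_of_ncard_ne_zero (hm.trans_ne m.succ_ne_zero)
    obtain ⟨e, heT, he⟩ := nonempty_of_ncard_ne_zero ((hsymm q ▸ hm).trans_ne m.succ_ne_zero)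
    obtain ⟨q₁, h₁, hr₁⟩ := exists_tokenSlides_of_walk (hG a e).some q haq he
    have hm₁ : (range q₁ \ T).ncard = m := by
      rw [hr₁, insert_sdiff_of_mem _ heT, sdiff_right_comm,
        ncard_sdiff_singleton_of_mem (show a ∈ range q \ T from ⟨haq, haT⟩), hm, Nat.add_sub_cancel]
    obtain ⟨q₂, h₂, hr₂⟩ := ih q₁ hm₁
    exact ⟨q₂, h₁.trans h₂, hr₂⟩

theorem isPlan_zero_of_tokenSlide {n ℓ : ℕ} (hG : G.Connected) (f : ℕ → (Fin n ↪ V))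
    (hf : ∀ k < ℓ, G.TokenSlide (f k) (f (k + 1))) :
    IsPlan G 0 n ℓ (fun k => f k) (range (f 0)) (range (f ℓ)) := by
  refine ⟨rfl, rfl, fun k _ i j hij => hG.pos_dist_of_ne ((f k).injective.ne hij), ?_⟩
  intro k hk j
  obtain ⟨i, hadj, hfix⟩ := hf k hk
  by_cases hji : j = i
  · exact .inr (hji ▸ hadj)
  · exact .inl (hfix j hji)

end SimpleGraph

theorem Set.exists_embedding_fin_range_eq {V : Type*} {S : Set V} {n : ℕ} (hS : S.Finite)
    (hcard : S.ncard = n) : ∃ q : Fin n ↪ V, range q = S := by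
  have : Finite S := hS
  let e := Finite.equivFinOfCardEq ((Nat.card_coe_set_eq S).trans hcard)
  refine ⟨e.symm.toEmbedding.trans (Embedding.subtype _), ?_⟩
  rw [Embedding.coe_trans, range_comp, Equiv.coe_toEmbedding, e.symm.range_eq_univ, image_univ,
    Embedding.coe_subtype, Subtype.range_coe]

theorem zeroIUMAPF_complete_general {V : Type*} [Fintype V] (G : SimpleGraph V)
    (hconn : G.Connected)
    (n : ℕ)
    (S T : Set V) (hS : S.ncard = n) (hT : T.ncard = n) :
    ∃ (ℓ : ℕ) (Q : ℕ → Fin n → V), IsPlan G 0 n ℓ Q S T := by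
  obtain ⟨q₀, rfl⟩ := Set.exists_embedding_fin_range_eq S.toFinite hS
  obtain ⟨q₁, hslides, rfl⟩ := hconn.exists_tokenSlides q₀ T.toFinite (hT.trans (Nat.card_fin n).symm)
  obtain ⟨ℓ, f, rfl, rfl, hf⟩ := hslides.exists_seq
  exact ⟨ℓ, fun k => f k, isPlan_zero_of_tokenSlide hconn f hf⟩

/-- on a finite simple connected graph with no edge `uv` such that
`G[V ∖ {u,v}]` is disconnected, every instance of 0IUMAPF with `n < |V|` agents is
feasible. -/
theorem zeroIUMAPF_complete {V : Type*} [Fintype V] (G : SimpleGraph V)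
    (hconn : G.Connected)
    (hsep : ∀ u v : V, G.Adj u v → (G.induce (({u, v} : Set V)ᶜ)).Connected)
    (n : ℕ) (hn : n < Fintype.card V)
    (S T : Set V) (hS : S.ncard = n) (hT : T.ncard = n) :
    ∃ (ℓ : ℕ) (Q : ℕ → Fin n → V), IsPlan G 0 n ℓ Q S T :=
  zeroIUMAPF_complete_general G hconn n S T hS hT
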